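/- arXiv:1212.1095 — 3 statements merged into one kernel-verified Lean document; each statement's English description precedes it below -/
import Mathlib

section
/- Let p = p_k be a site, θ a unit vector, and t ∈ [0,∞). If the point y = p + tθ belongs to the Voronoi cell R_k and there exists a site p_j with j ≠ k satisfying d(y, p_k) = d(y, p_j), then y is the endpoint of the ray from p in direction θ, i.e., t = T(θ, p). -/
/-!
Along the ray `s ↦ p + s • θ`, the difference `dist(·, q)² - dist(·, p)²` is an affine function
of `s`, equal to `dist p q² > 0` at `s = 0`. If it vanishes at some `t ≥ 0`, it is negative for
every `s > t`, so beyond the bisector of `p` and `q` the ray leaves the Voronoi cell of `p`;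
hence `t` is the largest parameter of the ray inside the cell, which is `T`.
-/

open RealInnerProductSpace

section RayBisector

variable {E : Type*} [NormedAddCommGroup E] [InnerProductSpace ℝ E]

theorem dist_add_smul_sq_sub_dist_add_smul_sq (p q v : E) (s : ℝ) :
    dist (p + s • v) q ^ 2 - dist (p + s • v) p ^ 2 = dist p q ^ 2 + 2 * s * ⟪p - q, v⟫ := by
  have hq : p + s • v - q = (p - q) + s • v := by abel
  simp only [dist_eq_norm, hq, add_sub_cancel_left, norm_add_sq_real, real_inner_smul_right]
  ring

theorem dist_add_smul_lt_of_dist_eq {p q v : E} {t s : ℝ} (hpq : p ≠ q) (ht : 0 ≤ t)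
    (hbis : dist (p + t • v) p = dist (p + t • v) q) (hts : t < s) :
    dist (p + s • v) q < dist (p + s • v) p := by
  have hpos : 0 < dist p q ^ 2 := pow_pos (dist_pos.mpr hpq) 2
  have hzero : dist p q ^ 2 + 2 * t * ⟪p - q, v⟫ = 0 := by
    rw [← dist_add_smul_sq_sub_dist_add_smul_sq, hbis, sub_self]
  have hneg : dist p q ^ 2 + 2 * s * ⟪p - q, v⟫ < 0 := by nlinarith
  rw [← dist_add_smul_sq_sub_dist_add_smul_sq, sub_neg] at hneg
  exact lt_of_pow_lt_pow_left₀ 2 dist_nonneg hneg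

end RayBisector

theorem point_in_cell_on_bisector_is_endpoint_general
    (n : ℕ)
    (X : Set (EuclideanSpace ℝ (Fin 2)))
    (p : Fin n → EuclideanSpace ℝ (Fin 2))
    (hpinj : Function.Injective p)
    (k : Fin n)
    (R : Set (EuclideanSpace ℝ (Fin 2)))
    (hR : R = {x | x ∈ X ∧ ∀ j, j ≠ k → dist x (p k) ≤ dist x (p j)})
    (θ : EuclideanSpace ℝ (Fin 2))
    (T : ℝ)
    (hT : T = sSup {t : ℝ | 0 ≤ t ∧ p k + t • θ ∈ X ∧
        ∀ j, j ≠ k → dist (p k + t • θ) (p k) ≤ dist (p k + t • θ) (p j)})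
    (t : ℝ) (ht : 0 ≤ t)
    (y : EuclideanSpace ℝ (Fin 2)) (hy : y = p k + t • θ)
    (hyR : y ∈ R)
    (hbis : ∃ j, j ≠ k ∧ dist y (p k) = dist y (p j)) :
    t = T := by
  subst hR hT hy
  obtain ⟨hyX, hcell⟩ := hyR
  obtain ⟨j, hjk, hjbis⟩ := hbis
  refine (IsGreatest.csSup_eq ?_).symm
  refine ⟨⟨ht, hyX, hcell⟩, ?_⟩
  rintro s ⟨-, -, hs⟩
  by_contra! hts
  exact (hs j hjk).not_gt (dist_add_smul_lt_of_dist_eq (hpinj.ne hjk.symm) ht hjbis hts)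

/-- If `y = p + tθ` (with `t ≥ 0`) belongs to the Voronoi cell `R_k` and
`d(y,p_k) = d(y,p_j)` for some site `p_j`, `j ≠ k`, then `y` is the endpoint of the ray
from `p` in direction `θ`, i.e. `t = T(θ,p)`. -/
theorem point_in_cell_on_bisector_is_endpoint
    (n : ℕ) (hn : 2 ≤ n)
    (X : Set (EuclideanSpace ℝ (Fin 2)))
    (hXcompact : IsCompact X) (hXconvex : Convex ℝ X)
    (p : Fin n → EuclideanSpace ℝ (Fin 2))
    (hpX : ∀ k, p k ∈ X)
    (hpinj : Function.Injective p)
    (k : Fin n)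
    (R : Set (EuclideanSpace ℝ (Fin 2)))
    (hR : R = {x | x ∈ X ∧ ∀ j, j ≠ k → dist x (p k) ≤ dist x (p j)})
    (θ : EuclideanSpace ℝ (Fin 2)) (hθ : ‖θ‖ = 1)
    (T : ℝ)
    (hT : T = sSup {t : ℝ | 0 ≤ t ∧ p k + t • θ ∈ X ∧
        ∀ j, j ≠ k → dist (p k + t • θ) (p k) ≤ dist (p k + t • θ) (p j)})
    (t : ℝ) (ht : 0 ≤ t)
    (y : EuclideanSpace ℝ (Fin 2)) (hy : y = p k + t • θ)
    (hyR : y ∈ R)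
    (hbis : ∃ j, j ≠ k ∧ dist y (p k) = dist y (p j)) :
    t = T :=
  point_in_cell_on_bisector_is_endpoint_general n X p hpinj k R hR θ T hT t ht y hy hyR hbis
end

section
/- Let p and a be two distinct points in ℝ² and let y be a point with d(y, a) < d(y, p). Then the closed segment [p, y] intersects the bisector {x ∈ ℝ² : d(x, p) = d(x, a)} in exactly one point. -/
/-! Along the segment `t ↦ p + t • (y - p)`, the quantity `d(x, a)² - d(x, p)²` is an affine
function of `t`. It equals `d(p, a)² ≥ 0` at `t = 0` and is negative at `t = 1`, so it has exactly
one zero in `[0, 1]`; the zeros are exactly the points of the segment on the bisector. -/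

open AffineMap

theorem existsUnique_mem_Icc_add_mul_eq_zero {β γ : ℝ} (hβ : 0 ≤ β) (h₁ : β + γ < 0) :
    ∃! t : ℝ, t ∈ Set.Icc (0 : ℝ) 1 ∧ β + t * γ = 0 := by
  have hγ : γ < 0 := by linarith
  have hγ₀ : γ ≠ 0 := hγ.ne
  refine ⟨-β / γ, ⟨⟨?_, ?_⟩, ?_⟩, ?_⟩
  · exact div_nonneg_of_nonpos (neg_nonpos.2 hβ) hγ.le
  · rw [div_le_one_of_neg hγ]; linarith
  · field_simp; ring
  · rintro t ⟨-, ht⟩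
    rw [eq_div_iff hγ₀]
    linarith

section InnerProductSpace

variable {E : Type*} [NormedAddCommGroup E] [InnerProductSpace ℝ E]

theorem dist_sq_lineMap_sub_dist_sq (p a y : E) (t : ℝ) :
    dist (lineMap p y t) a ^ 2 - dist (lineMap p y t) p ^ 2 =
      dist p a ^ 2 + t * (dist y a ^ 2 - dist y p ^ 2 - dist p a ^ 2) := by
  have hya : y - a = (y - p) + (p - a) := by abel
  have hxa : t • (y - p) + p - a = t • (y - p) + (p - a) := by abel
  simp only [lineMap_apply_module', dist_eq_norm, add_sub_cancel_right, hya, hxa,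
    norm_add_sq_real, norm_smul, real_inner_smul_left, Real.norm_eq_abs, mul_pow, sq_abs]
  ring

theorem existsUnique_mem_segment_dist_eq {p a y : E} (hy : dist y a < dist y p) :
    ∃! x : E, x ∈ segment ℝ p y ∩ {x | dist x p = dist x a} := by
  have on_bisector (x : E) : dist x p = dist x a ↔ dist x a ^ 2 - dist x p ^ 2 = 0 := by
    rw [sub_eq_zero, eq_comm, sq_eq_sq₀ dist_nonneg dist_nonneg]
  have hy_sq : dist y a ^ 2 < dist y p ^ 2 := pow_lt_pow_left₀ hy dist_nonneg two_ne_zero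
  obtain ⟨t, ⟨ht, hroot⟩, huniq⟩ :=
    existsUnique_mem_Icc_add_mul_eq_zero (γ := dist y a ^ 2 - dist y p ^ 2 - dist p a ^ 2)
      (sq_nonneg (dist p a)) (by linarith)
  rw [segment_eq_image_lineMap]
  refine ⟨lineMap p y t, ⟨⟨t, ht, rfl⟩, ?_⟩, ?_⟩
  · rwa [Set.mem_ofPred_eq, on_bisector, dist_sq_lineMap_sub_dist_sq]
  · rintro _ ⟨⟨s, hs, rfl⟩, hbis⟩
    rw [Set.mem_ofPred_eq, on_bisector, dist_sq_lineMap_sub_dist_sq] at hbis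
    rw [huniq s ⟨hs, hbis⟩]

end InnerProductSpace

theorem segment_inter_bisector_unique_general
    (p a y : EuclideanSpace ℝ (Fin 2))
    (hy : dist y a < dist y p) :
    ∃! x : EuclideanSpace ℝ (Fin 2),
      x ∈ segment ℝ p y ∩ {x | dist x p = dist x a} :=
  existsUnique_mem_segment_dist_eq hy

/-- If `p ≠ a` and `d(y,a) < d(y,p)`, then the closed segment `[p,y]`
intersects the bisector `{x : d(x,p) = d(x,a)}` in exactly one point. -/
theorem segment_inter_bisector_unique
    (p a y : EuclideanSpace ℝ (Fin 2))
    (hpa : p ≠ a)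
    (hy : dist y a < dist y p) :
    ∃! x : EuclideanSpace ℝ (Fin 2),
      x ∈ segment ℝ p y ∩ {x | dist x p = dist x a} :=
  segment_inter_bisector_unique_general p a y hy
end

section
/- Let p = p_k be a site lying in the interior of its Voronoi cell R_k, let θ_1 and θ_2 be linearly independent unit vectors, and set T_i = T(θ_i, p)θ_i for i = 1, 2. Suppose there is a line L such that both endpoints p + T_1 and p + T_2 lie on L, the cell R_k is contained in one of the two closed halfplanes bounded by L, and p ∉ L. Then every extreme point of R_k that lies in the cone {p + μ_1 T_1 + μ_2 T_2 : μ_1 ≥ 0, μ_2 ≥ 0} is equal to p + T_1 or to p + T_2. -/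
/-!
Write `v = p + μ₁ T₁ + μ₂ T₂` and `s = μ₁ + μ₂`. Since both endpoints lie on `L`,
`⟪N, v⟫ - c = (1 - s)(⟪N, p⟫ - c)`; as the cell lies on one side of `L` and `p ∉ L`, `s ≤ 1`.
As `p` is interior it is not extreme, so `s > 0`, and `v` lies on the segment from `p` to the
point `w = (μ₁/s)(p + T₁) + (μ₂/s)(p + T₂)` of the cell. Extremality of `v` gives first `v = w`,
and then, `w` lying on the segment between the two endpoints, that `v` is one of them.
-/

open scoped RealInnerProductSpace

open Set

def voronoiCell {ι E : Type*} [Dist E] (X : Set E) (p : ι → E) (k : ι) : Set E :=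
  {x | x ∈ X ∧ ∀ j, j ≠ k → dist x (p k) ≤ dist x (p j)}

theorem voronoiCell_eq_inter_iInter {ι E : Type*} [Dist E] (X : Set E) (p : ι → E) (k : ι) :
    voronoiCell X p k = X ∩ ⋂ j ∈ {j | j ≠ k}, {x | dist x (p k) ≤ dist x (p j)} := by
  ext x; simp [voronoiCell, mem_iInter]

theorem isClosed_voronoiCell {ι E : Type*} [PseudoMetricSpace E] {X : Set E} (hX : IsClosed X)
    (p : ι → E) (k : ι) : IsClosed (voronoiCell X p k) := by
  rw [voronoiCell_eq_inter_iInter]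
  exact hX.inter <| isClosed_biInter fun j _ ↦
    isClosed_le (continuous_id.dist continuous_const) (continuous_id.dist continuous_const)

section InnerProductSpace

variable {E : Type*} [NormedAddCommGroup E] [InnerProductSpace ℝ E]

theorem setOf_dist_le_dist_eq_halfSpace (a b : E) :
    {x | dist x a ≤ dist x b} = {x | ⟪b - a, x⟫ ≤ (‖b‖ ^ 2 - ‖a‖ ^ 2) / 2} := by
  ext x
  simp only [mem_ofPred_eq]
  rw [dist_eq_norm, dist_eq_norm,
    ← pow_le_pow_iff_left₀ (norm_nonneg (x - a)) (norm_nonneg (x - b)) two_ne_zero,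
    norm_sub_sq_real, norm_sub_sq_real, inner_sub_left, real_inner_comm x a, real_inner_comm x b]
  constructor <;> intro h <;> linarith

theorem convex_setOf_dist_le_dist (a b : E) : Convex ℝ {x | dist x a ≤ dist x b} := by
  rw [setOf_dist_le_dist_eq_halfSpace]
  exact convex_halfSpace_le (innerₛₗ ℝ (b - a)).isLinear _

theorem convex_voronoiCell {ι : Type*} {X : Set E} (hX : Convex ℝ X) (p : ι → E) (k : ι) :
    Convex ℝ (voronoiCell X p k) := by
  rw [voronoiCell_eq_inter_iInter]
  exact hX.inter <| convex_iInter fun j ↦ convex_iInter fun _ ↦ convex_setOf_dist_le_dist _ _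

end InnerProductSpace

theorem IsCompact.add_sSup_smul_mem {E : Type*} [NormedAddCommGroup E] [NormedSpace ℝ E]
    {K : Set E} (hK : IsCompact K) {p θ : E} (hp : p ∈ K) (hθ : θ ≠ 0) :
    p + sSup {t : ℝ | 0 ≤ t ∧ p + t • θ ∈ K} • θ ∈ K := by
  set S := {t : ℝ | 0 ≤ t ∧ p + t • θ ∈ K}
  have hS0 : (0 : ℝ) ∈ S := ⟨le_rfl, by simpa using hp⟩
  have hSclosed : IsClosed S :=
    isClosed_Ici.inter (hK.isClosed.preimage (continuous_const.add (continuous_id.smul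
      continuous_const)))
  obtain ⟨C, hC⟩ := hK.isBounded.subset_closedBall p
  have hSbdd : BddAbove S := by
    refine ⟨C / ‖θ‖, fun t ⟨ht, htK⟩ ↦ ?_⟩
    have hdist := Metric.mem_closedBall.mp (hC htK)
    rw [dist_eq_norm, add_sub_cancel_left, norm_smul, Real.norm_of_nonneg ht] at hdist
    exact (le_div_iff₀ (norm_pos_iff.mpr hθ)).mpr hdist
  exact (hSclosed.csSup_mem ⟨0, hS0⟩ hSbdd).2

section ConeExtremePoints

variable {E : Type*} [AddCommGroup E] [Module ℝ E] {R : Set E} {f : E →ₗ[ℝ] ℝ} {c : ℝ}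
  {p T₁ T₂ : E} {μ₁ μ₂ : ℝ}

theorem add_smul_add_smul_sum_le_one (hhalf : R ⊆ {x | f x ≤ c} ∨ R ⊆ {x | c ≤ f x})
    (hp : p ∈ R) (hfp : f p ≠ c) (hf₁ : f (p + T₁) = c) (hf₂ : f (p + T₂) = c)
    (hv : p + μ₁ • T₁ + μ₂ • T₂ ∈ R) : μ₁ + μ₂ ≤ 1 := by
  have hfv : f (p + μ₁ • T₁ + μ₂ • T₂) - c = (1 - (μ₁ + μ₂)) * (f p - c) := by
    simp only [map_add, map_smul, smul_eq_mul] at hf₁ hf₂ ⊢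
    linear_combination μ₁ * hf₁ + μ₂ * hf₂
  have hsame_side : 0 ≤ (f (p + μ₁ • T₁ + μ₂ • T₂) - c) * (f p - c) := by
    rcases hhalf with h | h
    · exact mul_nonneg_of_nonpos_of_nonpos (sub_nonpos.mpr (h hv)) (sub_nonpos.mpr (h hp))
    · exact mul_nonneg (sub_nonneg.mpr (h hv)) (sub_nonneg.mpr (h hp))
  rw [hfv, mul_assoc, ← sq] at hsame_side
  have := (mul_nonneg_iff_of_pos_right (pow_two_pos_of_ne_zero (sub_ne_zero.mpr hfp))).mp hsame_side
  linarith

theorem eq_endpoint_of_mem_extremePoints_of_mem_cone (hR : Convex ℝ R)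
    (hhalf : R ⊆ {x | f x ≤ c} ∨ R ⊆ {x | c ≤ f x}) (hp : p ∈ R) (hpext : p ∉ R.extremePoints ℝ)
    (hfp : f p ≠ c) (h₁ : p + T₁ ∈ R) (h₂ : p + T₂ ∈ R) (hf₁ : f (p + T₁) = c)
    (hf₂ : f (p + T₂) = c) (hμ₁ : 0 ≤ μ₁) (hμ₂ : 0 ≤ μ₂)
    (hv : p + μ₁ • T₁ + μ₂ • T₂ ∈ R.extremePoints ℝ) :
    p + μ₁ • T₁ + μ₂ • T₂ = p + T₁ ∨ p + μ₁ • T₁ + μ₂ • T₂ = p + T₂ := by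
  set s := μ₁ + μ₂
  have hs_pos : 0 < s := by
    by_contra! hs
    obtain ⟨rfl, rfl⟩ : μ₁ = 0 ∧ μ₂ = 0 := ⟨by linarith, by linarith⟩
    exact hpext (by simpa using hv)
  have hs_le : s ≤ 1 := add_smul_add_smul_sum_le_one hhalf hp hfp hf₁ hf₂ hv.1
  set w := (μ₁ / s) • (p + T₁) + (μ₂ / s) • (p + T₂)
  have hw_seg : w ∈ segment ℝ (p + T₁) (p + T₂) :=
    ⟨μ₁ / s, μ₂ / s, div_nonneg hμ₁ hs_pos.le, div_nonneg hμ₂ hs_pos.le,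
      by rw [← add_div, div_self hs_pos.ne'], rfl⟩
  have hv_seg : p + μ₁ • T₁ + μ₂ • T₂ ∈ segment ℝ p w := by
    refine ⟨1 - s, s, by linarith, hs_pos.le, by ring, ?_⟩
    match_scalars <;> field_simp
    linarith
  have hvw : w = p + μ₁ • T₁ + μ₂ • T₂ := by
    rcases (mem_extremePoints_iff_forall_segment.mp hv).2 p hp w
      (hR.segment_subset h₁ h₂ hw_seg) hv_seg with h | h
    · exact absurd (h ▸ hv) hpext
    · exact h
  rw [← hvw] at hv ⊢
  rcases (mem_extremePoints_iff_forall_segment.mp hv).2 _ h₁ _ h₂ hw_seg with h | h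
  exacts [.inl h.symm, .inr h.symm]

end ConeExtremePoints

theorem vertices_in_cone_are_endpoints_same_facet_general
    (n : ℕ)
    (X : Set (EuclideanSpace ℝ (Fin 2)))
    (hXcompact : IsCompact X) (hXconvex : Convex ℝ X)
    (p : Fin n → EuclideanSpace ℝ (Fin 2))
    (k : Fin n)
    (R : Set (EuclideanSpace ℝ (Fin 2)))
    (hR : R = {x | x ∈ X ∧ ∀ j, j ≠ k → dist x (p k) ≤ dist x (p j)})
    (hpint : p k ∈ interior R)
    (θ₁ θ₂ : EuclideanSpace ℝ (Fin 2))
    (hθ₁ : ‖θ₁‖ = 1) (hθ₂ : ‖θ₂‖ = 1)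
    (Tfun : EuclideanSpace ℝ (Fin 2) → ℝ)
    (hTfun : ∀ θ, ‖θ‖ = 1 →
      Tfun θ = sSup {t : ℝ | 0 ≤ t ∧ p k + t • θ ∈ X ∧
        ∀ j, j ≠ k → dist (p k + t • θ) (p k) ≤ dist (p k + t • θ) (p j)})
    (T₁ T₂ : EuclideanSpace ℝ (Fin 2))
    (hT₁ : T₁ = Tfun θ₁ • θ₁) (hT₂ : T₂ = Tfun θ₂ • θ₂)
    (N : EuclideanSpace ℝ (Fin 2)) (c : ℝ)
    (L : Set (EuclideanSpace ℝ (Fin 2)))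
    (hL : L = {x | ⟪N, x⟫ = c})
    (hend₁ : p k + T₁ ∈ L) (hend₂ : p k + T₂ ∈ L)
    (hhalf : R ⊆ {x | ⟪N, x⟫ ≤ c} ∨ R ⊆ {x | c ≤ ⟪N, x⟫})
    (hpL : p k ∉ L) :
    ∀ v ∈ Set.extremePoints ℝ R,
      v ∈ {x | ∃ μ₁ μ₂ : ℝ, 0 ≤ μ₁ ∧ 0 ≤ μ₂ ∧ x = p k + μ₁ • T₁ + μ₂ • T₂} →
      v = p k + T₁ ∨ v = p k + T₂ := by
  rintro v hv ⟨μ₁, μ₂, hμ₁, hμ₂, rfl⟩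
  change R = voronoiCell X p k at hR
  subst hR hL hT₁ hT₂
  have hcompact : IsCompact (voronoiCell X p k) :=
    hXcompact.of_isClosed_subset (isClosed_voronoiCell hXcompact.isClosed p k) fun _ hx ↦ hx.1
  have hpR : p k ∈ voronoiCell X p k := interior_subset hpint
  have hendpoint : ∀ θ, ‖θ‖ = 1 → p k + Tfun θ • θ ∈ voronoiCell X p k := fun θ hθ ↦
    hTfun θ hθ ▸ hcompact.add_sSup_smul_mem hpR (norm_ne_zero_iff.mp (hθ ▸ one_ne_zero))
  exact eq_endpoint_of_mem_extremePoints_of_mem_cone (f := innerₛₗ ℝ N)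
    (convex_voronoiCell hXconvex p k) hhalf hpR
    (disjoint_left.mp (disjoint_interior_extremePoints _) hpint) hpL
    (hendpoint θ₁ hθ₁) (hendpoint θ₂ hθ₂) hend₁ hend₂ hμ₁ hμ₂ hv

/-- Let `p = p_k` lie in the interior of its Voronoi cell `R_k`, let
`θ₁, θ₂` be linearly independent unit vectors and `T_i = T(θ_i,p)θ_i`. If there is a line
`L` containing both endpoints `p + T₁` and `p + T₂` such that `R_k` lies in one of the two
closed halfplanes bounded by `L` and `p ∉ L`, then every extreme point (vertex) of `R_k`
lying in the cone `{p + μ₁T₁ + μ₂T₂ : μ₁, μ₂ ≥ 0}` equals `p + T₁` or `p + T₂`. -/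
theorem vertices_in_cone_are_endpoints_same_facet
    (n : ℕ) (hn : 2 ≤ n)
    (X : Set (EuclideanSpace ℝ (Fin 2)))
    (hXcompact : IsCompact X) (hXconvex : Convex ℝ X)
    (p : Fin n → EuclideanSpace ℝ (Fin 2))
    (hpX : ∀ k, p k ∈ X)
    (hpinj : Function.Injective p)
    (k : Fin n)
    (R : Set (EuclideanSpace ℝ (Fin 2)))
    (hR : R = {x | x ∈ X ∧ ∀ j, j ≠ k → dist x (p k) ≤ dist x (p j)})
    (hpint : p k ∈ interior R)
    (θ₁ θ₂ : EuclideanSpace ℝ (Fin 2))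
    (hθ₁ : ‖θ₁‖ = 1) (hθ₂ : ‖θ₂‖ = 1)
    (hind : LinearIndependent ℝ ![θ₁, θ₂])
    (Tfun : EuclideanSpace ℝ (Fin 2) → ℝ)
    (hTfun : ∀ θ, ‖θ‖ = 1 →
      Tfun θ = sSup {t : ℝ | 0 ≤ t ∧ p k + t • θ ∈ X ∧
        ∀ j, j ≠ k → dist (p k + t • θ) (p k) ≤ dist (p k + t • θ) (p j)})
    (T₁ T₂ : EuclideanSpace ℝ (Fin 2))
    (hT₁ : T₁ = Tfun θ₁ • θ₁) (hT₂ : T₂ = Tfun θ₂ • θ₂)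
    (N : EuclideanSpace ℝ (Fin 2)) (hN : N ≠ 0) (c : ℝ)
    (L : Set (EuclideanSpace ℝ (Fin 2)))
    (hL : L = {x | ⟪N, x⟫ = c})
    (hend₁ : p k + T₁ ∈ L) (hend₂ : p k + T₂ ∈ L)
    (hhalf : R ⊆ {x | ⟪N, x⟫ ≤ c} ∨ R ⊆ {x | c ≤ ⟪N, x⟫})
    (hpL : p k ∉ L) :
    ∀ v ∈ Set.extremePoints ℝ R,
      v ∈ {x | ∃ μ₁ μ₂ : ℝ, 0 ≤ μ₁ ∧ 0 ≤ μ₂ ∧ x = p k + μ₁ • T₁ + μ₂ • T₂} →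
      v = p k + T₁ ∨ v = p k + T₂ :=
  vertices_in_cone_are_endpoints_same_facet_general n X hXcompact hXconvex p k R hR hpint θ₁ θ₂ hθ₁
    hθ₂ Tfun hTfun T₁ T₂ hT₁ hT₂ N c L hL hend₁ hend₂ hhalf hpL
end
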